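/- If 2(t−1) < n ≤ 3t−2, then γ_{t,1}(T_n) = 3. In particular no 2 balls of radius t−1 in the triangular lattice can cover T_n when n > 2(t−1), because each ball has diameter 2(t−1) and T_n has three corner vertices pairwise at distance n > 2(t−1). -/
import Mathlib


/-- Hexagonal (triangular-lattice) graph distance on `ℤ × ℤ`,
where the lattice point `(a, b)` represents `a•α₁ + b•α₂`. -/
def hexDist (u v : ℤ × ℤ) : ℕ :=
  if 0 ≤ (u.1 - v.1) * (u.2 - v.2) then max (u.1 - v.1).natAbs (u.2 - v.2).natAbs
  else (u.1 - v.1).natAbs + (u.2 - v.2).natAbs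

/-- Vertex set of the triangular matchstick graph `T_n` (in lattice coordinates). -/
def TnSet (n : ℕ) : Set (ℤ × ℤ) := {p | 0 ≤ p.1 ∧ p.1 ≤ p.2 ∧ p.2 ≤ (n : ℤ)}

/-- Reception at `u` from a finite set `S` of broadcast vertices of strength `t`. -/
def reception (S : Finset (ℤ × ℤ)) (t : ℕ) (u : ℤ × ℤ) : ℕ :=
  ∑ v ∈ S, (t - hexDist u v)

/-- The `(t,r)` broadcast domination number of the triangular matchstick graph `T_n`. -/
noncomputable def gammaTR (t r n : ℕ) : ℕ :=
  sInf {k : ℕ | ∃ S : Finset (ℤ × ℤ), ↑S ⊆ TnSet n ∧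
    (∀ u ∈ TnSet n, r ≤ reception S t u) ∧ S.card = k}

lemma hexDist_le_iff (u v : ℤ × ℤ) (r : ℕ) :
    hexDist u v ≤ r ↔ (u.1 - v.1).natAbs ≤ r ∧ (u.2 - v.2).natAbs ≤ r ∧
      ((u.1 - v.1) - (u.2 - v.2)).natAbs ≤ r := by
  unfold hexDist
  split_ifs with h
  · rcases mul_nonneg_iff.mp h with ⟨h1, h2⟩ | ⟨h1, h2⟩ <;> simp only [Nat.max_le] <;> omega
  · rcases mul_neg_iff.mp (lt_of_not_ge h) with ⟨h1, h2⟩ | ⟨h1, h2⟩ <;> omega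

lemma hexDist_self (u : ℤ × ℤ) : hexDist u u = 0 := by simp [hexDist]


lemma mem_TnSet (n : ℕ) (a b : ℤ) : (a, b) ∈ TnSet n ↔ 0 ≤ a ∧ a ≤ b ∧ b ≤ (n : ℤ) :=
  Iff.rfl

lemma hexDist_le_iff' (x y a b : ℤ) (r : ℕ) :
    hexDist (x, y) (a, b) ≤ r ↔ (x - a).natAbs ≤ r ∧ (y - b).natAbs ≤ r ∧
      ((x - a) - (y - b)).natAbs ≤ r :=
  hexDist_le_iff (x, y) (a, b) r

/-- From positive reception extract a nearby broadcast vertex. -/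
lemma exists_close (S : Finset (ℤ × ℤ)) (t : ℕ) (u : ℤ × ℤ)
    (h : 1 ≤ reception S t u) : ∃ v ∈ S, hexDist u v ≤ t - 1 := by
  by_contra hc
  push_neg at hc
  have : reception S t u = 0 := by
    apply Finset.sum_eq_zero
    intro v hv
    have := hc v hv
    omega
  omega

/-- Single nearby vertex gives reception at least 1. -/
lemma one_le_reception (S : Finset (ℤ × ℤ)) (t : ℕ) (ht : 1 ≤ t) (u v : ℤ × ℤ)
    (hv : v ∈ S) (h : hexDist u v ≤ t - 1) : 1 ≤ reception S t u := by
  have h1 : 1 ≤ t - hexDist u v := by omega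
  calc 1 ≤ t - hexDist u v := h1
    _ ≤ reception S t u := Finset.single_le_sum (f := fun w => t - hexDist u w) (fun i _ => Nat.zero_le _) hv

/-- The defining set for `gammaTR t 1 n` is nonempty. -/
lemma gamma_set_nonempty (t n : ℕ) (ht : 1 ≤ t) :
    {k : ℕ | ∃ S : Finset (ℤ × ℤ), ↑S ⊆ TnSet n ∧
      (∀ u ∈ TnSet n, 1 ≤ reception S t u) ∧ S.card = k}.Nonempty := by
  set S : Finset (ℤ × ℤ) :=
    (Finset.Icc ((0 : ℤ), (0 : ℤ)) ((n : ℤ), (n : ℤ))).filter (fun p => p.1 ≤ p.2) with hS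
  have hmem : ∀ u ∈ TnSet n, u ∈ S := by
    rintro ⟨x, y⟩ ⟨h1, h2, h3⟩
    simp only [hS, Finset.mem_filter, Finset.mem_Icc, Prod.le_def]
    exact ⟨⟨⟨h1, le_trans h1 h2⟩, ⟨le_trans h2 h3, h3⟩⟩, h2⟩
  refine ⟨S.card, S, ?_, ?_, rfl⟩
  · rintro ⟨x, y⟩ hp
    simp only [hS, Finset.coe_filter, Finset.mem_Icc, Prod.le_def, Set.mem_setOf_eq] at hp
    exact ⟨hp.1.1.1, hp.2, hp.1.2.2⟩
  · intro u hu
    exact one_le_reception S t ht u u (hmem u hu) (by simp [hexDist_self])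

/-- Lower bound: any broadcast dominating set has at least 3 vertices. -/
lemma lower_bound (t n : ℕ) (ht : 1 ≤ t) (hn : 2 * (t - 1) < n)
    (S : Finset (ℤ × ℤ)) (hsub : ↑S ⊆ TnSet n)
    (hcov : ∀ u ∈ TnSet n, 1 ≤ reception S t u) : 2 < S.card := by
  by_contra hc
  push_neg at hc
  have hc0 : ((0 : ℤ), (0 : ℤ)) ∈ TnSet n := by rw [mem_TnSet]; omega
  have hc1 : ((0 : ℤ), (n : ℤ)) ∈ TnSet n := by rw [mem_TnSet]; omega
  have hc2 : ((n : ℤ), (n : ℤ)) ∈ TnSet n := by rw [mem_TnSet]; omega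
  obtain ⟨v0, hv0S, hv0⟩ := exists_close S t _ (hcov _ hc0)
  obtain ⟨v1, hv1S, hv1⟩ := exists_close S t _ (hcov _ hc1)
  obtain ⟨v2, hv2S, hv2⟩ := exists_close S t _ (hcov _ hc2)
  rw [hexDist_le_iff' 0 0 v0.1 v0.2] at hv0
  rw [hexDist_le_iff' 0 (n : ℤ) v1.1 v1.2] at hv1
  rw [hexDist_le_iff' (n : ℤ) (n : ℤ) v2.1 v2.2] at hv2
  by_cases h01 : v0 = v1
  · subst h01; omega
  by_cases h02 : v0 = v2
  · subst h02; omega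
  by_cases h12 : v1 = v2
  · subst h12; omega
  have hsub3 : ({v0, v1, v2} : Finset (ℤ × ℤ)) ⊆ S := by
    intro x hx
    simp only [Finset.mem_insert, Finset.mem_singleton] at hx
    rcases hx with rfl | rfl | rfl <;> assumption
  have h3 : ({v0, v1, v2} : Finset (ℤ × ℤ)).card = 3 :=
    Finset.card_eq_three.mpr ⟨v0, v1, v2, h01, h02, h12, rfl⟩
  have := Finset.card_le_card hsub3
  omega

/-- Upper bound: three explicit centers cover `T_n` when `2(t-1) < n ≤ 3t-2`. -/
lemma upper_bound (t n : ℕ) (ht : 1 ≤ t) (hn : 2 * (t - 1) < n) (hn' : n ≤ 3 * t - 2) :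
    ∃ S : Finset (ℤ × ℤ), ↑S ⊆ TnSet n ∧
      (∀ u ∈ TnSet n, 1 ≤ reception S t u) ∧ S.card = 3 := by
  have hrn1 : 2 * ((t : ℤ) - 1) < (n : ℤ) := by omega
  have hrn2 : (n : ℤ) ≤ 3 * ((t : ℤ) - 1) + 1 := by omega
  have hrn3 : (0 : ℤ) ≤ (t : ℤ) - 1 := by omega
  have hne01 : ((0 : ℤ), (t : ℤ) - 1) ≠ (((t : ℤ) - 1), (n : ℤ)) := by
    intro h; rw [Prod.mk.injEq] at h; omega
  have hne02 : ((0 : ℤ), (t : ℤ) - 1) ≠ ((n : ℤ) - ((t : ℤ) - 1), (n : ℤ) - ((t : ℤ) - 1)) := by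
    intro h; rw [Prod.mk.injEq] at h; omega
  have hne12 : (((t : ℤ) - 1), (n : ℤ)) ≠ ((n : ℤ) - ((t : ℤ) - 1), (n : ℤ) - ((t : ℤ) - 1)) := by
    intro h; rw [Prod.mk.injEq] at h; omega
  refine ⟨{((0 : ℤ), (t : ℤ) - 1), (((t : ℤ) - 1), (n : ℤ)),
    ((n : ℤ) - ((t : ℤ) - 1), (n : ℤ) - ((t : ℤ) - 1))}, ?_, ?_, ?_⟩
  · intro x hx
    simp only [Finset.coe_insert, Finset.coe_singleton, Set.mem_insert_iff,
      Set.mem_singleton_iff] at hx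
    rcases hx with rfl | rfl | rfl <;> rw [mem_TnSet] <;> omega
  · rintro ⟨x, y⟩ hu
    rw [mem_TnSet] at hu
    have key : hexDist (x, y) ((0 : ℤ), (t : ℤ) - 1) ≤ t - 1 ∨
        hexDist (x, y) (((t : ℤ) - 1), (n : ℤ)) ≤ t - 1 ∨
        hexDist (x, y) ((n : ℤ) - ((t : ℤ) - 1), (n : ℤ) - ((t : ℤ) - 1)) ≤ t - 1 := by
      rw [hexDist_le_iff', hexDist_le_iff', hexDist_le_iff']
      omega
    rcases key with h | h | h
    · exact one_le_reception _ t ht _ _ (by simp) h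
    · exact one_le_reception _ t ht _ _ (by simp) h
    · exact one_le_reception _ t ht _ _ (by simp) h
  · exact Finset.card_eq_three.mpr ⟨_, _, _, hne01, hne02, hne12, rfl⟩

/-- If `2(t−1) < n ≤ 3t−2` then `γ_{t,1}(T_n) = 3`; in particular two balls of
radius `t−1` never suffice once `n > 2(t−1)`, i.e. `γ_{t,1}(T_n) > 2`. -/
theorem gammaTR_three (t n : ℕ) (ht : 1 ≤ t) :
    (2 * (t - 1) < n → n ≤ 3 * t - 2 → gammaTR t 1 n = 3) ∧
    (2 * (t - 1) < n → 2 < gammaTR t 1 n) := by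
  have hlow : 2 * (t - 1) < n → 2 < gammaTR t 1 n := by
    intro hn
    have hne := gamma_set_nonempty t n ht
    have hmem := Nat.sInf_mem hne
    obtain ⟨S, hsub, hcov, hcard⟩ := hmem
    have := lower_bound t n ht hn S hsub hcov
    unfold gammaTR
    omega
  refine ⟨?_, hlow⟩
  intro hn hn'
  have h3 : 3 ∈ {k : ℕ | ∃ S : Finset (ℤ × ℤ), ↑S ⊆ TnSet n ∧
      (∀ u ∈ TnSet n, 1 ≤ reception S t u) ∧ S.card = k} := upper_bound t n ht hn hn'
  have hle : gammaTR t 1 n ≤ 3 := Nat.sInf_le h3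
  have := hlow hn
  omega
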